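/- Let n ≥ 3 and 0 ≤ a ≤ a + b ≤ n. The maximum of P(S ∈ [a, a+b]) over all S that are sums of n standard uniform random variables equals min{2(a+b)/n, 2(n−a)/n, 1}. -/

import Mathlib

open MeasureTheory ProbabilityTheory Set

/-- The uniform distribution on `[a, b]`. -/
noncomputable def unif (a b : ℝ) : Measure ℝ :=
  (ENNReal.ofReal (b - a))⁻¹ • (volume.restrict (Set.Icc a b))

/-- `F` is smaller than `G` in convex order. -/
def ConvexOrder (F G : Measure ℝ) : Prop :=
  ∀ φ : ℝ → ℝ, ConvexOn ℝ Set.univ φ → Integrable φ F → Integrable φ G →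
    ∫ x, φ x ∂F ≤ ∫ x, φ x ∂G

/-- The set of possible distributions of `X 1 + ... + X n` with `X i ~ Fs i`. -/
def Dset (n : ℕ) (Fs : Fin n → Measure ℝ) : Set (Measure ℝ) :=
  {G | ∃ (Ω : Type) (_ : MeasureSpace Ω),
    IsProbabilityMeasure (ℙ : Measure Ω) ∧
    ∃ X : Fin n → Ω → ℝ, (∀ i, Measurable (X i)) ∧
      (∀ i, Measure.map (X i) ℙ = Fs i) ∧
      Measure.map (fun ω => ∑ i, X i ω) ℙ = G}

/-- The quantile (left-continuous inverse cdf) of a distribution. -/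
noncomputable def quantile (F : Measure ℝ) (t : ℝ) : ℝ :=
  sInf {x : ℝ | t ≤ (F (Set.Iic x)).toReal}

/-- `F` is the distribution of `X + Y` for some `X ~ μ`, `Y ~ ν`. -/
def IsSumDist (μ ν F : Measure ℝ) : Prop :=
  ∃ (Ω : Type) (_ : MeasureSpace Ω), IsProbabilityMeasure (ℙ : Measure Ω) ∧
    ∃ X Y : Ω → ℝ, Measurable X ∧ Measurable Y ∧
      Measure.map X ℙ = μ ∧ Measure.map Y ℙ = ν ∧
      Measure.map (fun ω => X ω + Y ω) ℙ = F

/-!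
If `U` is uniform on `[0, 1]` and `A` is an event of probability `p`, then `∫_A U ≥ p² / 2`, with
equality for `A = {U ≤ p}` (bathtub principle). For `A = {S ≤ c}` summing over the `n` variables
gives `n p² / 2 ≤ ∫_A S ≤ c p`, i.e. `n p ≤ 2 c`. Taking `c = a + b`, and `c = n - a` after the
reflection `Uᵢ ↦ 1 - Uᵢ`, bounds `P(S ∈ [a, a + b])`.

Conversely, the uniform law is completely mixable for `n ≥ 2`: pairs `x, 1 - x` and the triple
`x, x + 1/2 mod 1, -2x mod 1` give uniforms with constant sum `n / 2`. Running such a mix rescaled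
on `[0, p)` and setting every `Uᵢ = x` on `[p, 1]` makes `S = p n / 2` with probability `p` and
`S ≥ n p` otherwise. With `p` the claimed maximum (reflecting first when `a ≥ n / 2`), `S` lies
in `[a, a + b]` exactly on the first event.
-/

lemma unif_zero_one : unif 0 1 = volume.restrict (Icc 0 1) := by
  simp [unif]

instance isProbabilityMeasure_unif_zero_one : IsProbabilityMeasure (unif 0 1) :=
  ⟨by simp [unif_zero_one]⟩

lemma map_affine_volume_restrict_uIcc {α : ℝ} (hα : α ≠ 0) (β c d : ℝ) :
    (volume.restrict (uIcc c d)).map (fun x => α * x + β)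
      = ENNReal.ofReal |α⁻¹| • volume.restrict (uIcc (α * c + β) (α * d + β)) := by
  have hpre : (fun x => α * x + β) ⁻¹' (uIcc (α * c + β) (α * d + β)) = uIcc c d := by
    rw [show (fun x => α * x + β) = (· + β) ∘ (α * ·) from rfl, preimage_comp,
      preimage_add_const_uIcc, preimage_const_mul_uIcc hα]
    simp [hα]
  have hmap : volume.map (fun x : ℝ => α * x + β) = ENNReal.ofReal |α⁻¹| • volume := by
    change volume.map ((· + β) ∘ (α * ·)) = _
    rw [← Measure.map_map (by fun_prop) (by fun_prop), Real.map_volume_mul_left hα,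
      Measure.map_smul, map_add_right_eq_self]
  rw [← hpre, ← Measure.restrict_map (by fun_prop) measurableSet_uIcc, hmap,
    Measure.restrict_smul]

lemma map_volume_restrict_Icc_congr {f g : ℝ → ℝ} {c d : ℝ} (hfg : EqOn f g (Ico c d)) :
    (volume.restrict (Icc c d)).map f = (volume.restrict (Icc c d)).map g := by
  rw [← Measure.restrict_congr_set Ico_ae_eq_Icc]
  exact Measure.map_congr (ae_restrict_of_forall_mem measurableSet_Ico hfg)

lemma map_volume_restrict_Icc_of_eqOn_Ico {f : ℝ → ℝ} {c d α β : ℝ} (hcd : c ≤ d)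
    (hα : α ≠ 0) (hf : EqOn f (fun x => α * x + β) (Ico c d)) :
    (volume.restrict (Icc c d)).map f
      = ENNReal.ofReal |α⁻¹| • volume.restrict (uIcc (α * c + β) (α * d + β)) := by
  rw [map_volume_restrict_Icc_congr hf, ← uIcc_of_le hcd, map_affine_volume_restrict_uIcc hα]

lemma volume_restrict_Icc_add_Icc {a b c : ℝ} (hab : a ≤ b) (hbc : b ≤ c) :
    volume.restrict (Icc a b) + volume.restrict (Icc b c) = volume.restrict (Icc a c) := by
  simp only [← Measure.restrict_congr_set Ioc_ae_eq_Icc]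
  rw [← Measure.restrict_union (Ioc_disjoint_Ioc_of_le le_rfl) measurableSet_Ioc,
    Ioc_union_Ioc_eq_Ioc hab hbc]

lemma measurePreserving_one_sub_unif :
    MeasurePreserving (fun x => 1 - x) (unif 0 1) (unif 0 1) := by
  refine ⟨by fun_prop, ?_⟩
  rw [unif_zero_one, map_volume_restrict_Icc_of_eqOn_Ico zero_le_one (α := -1) (β := 1)
    (by norm_num) (fun x _ => by ring)]
  norm_num [uIcc_of_ge]

noncomputable def rotateHalf (x : ℝ) : ℝ := if x < 1 / 2 then x + 1 / 2 else x - 1 / 2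

noncomputable def doubleReflect (x : ℝ) : ℝ := if x < 1 / 2 then 1 - 2 * x else 2 - 2 * x

lemma add_rotateHalf_add_doubleReflect (x : ℝ) : x + rotateHalf x + doubleReflect x = 3 / 2 := by
  unfold rotateHalf doubleReflect
  split_ifs <;> ring

lemma measurable_rotateHalf : Measurable rotateHalf :=
  Measurable.ite measurableSet_Iio (by fun_prop) (by fun_prop)

lemma measurable_doubleReflect : Measurable doubleReflect :=
  Measurable.ite measurableSet_Iio (by fun_prop) (by fun_prop)

lemma measurePreserving_rotateHalf : MeasurePreserving rotateHalf (unif 0 1) (unif 0 1) := by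
  refine ⟨measurable_rotateHalf, ?_⟩
  have hleft : (volume.restrict (Icc 0 (1 / 2))).map rotateHalf
      = volume.restrict (Icc (1 / 2) 1) := by
    rw [map_volume_restrict_Icc_of_eqOn_Ico (by norm_num) one_ne_zero (β := 1 / 2)
      (fun x hx => by rw [rotateHalf, if_pos hx.2]; ring)]
    norm_num [uIcc_of_le]
  have hright : (volume.restrict (Icc (1 / 2) 1)).map rotateHalf
      = volume.restrict (Icc 0 (1 / 2)) := by
    rw [map_volume_restrict_Icc_of_eqOn_Ico (by norm_num) one_ne_zero (β := -(1 / 2))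
      (fun x hx => by rw [rotateHalf, if_neg (not_lt.2 hx.1)]; ring)]
    norm_num [uIcc_of_le]
  rw [unif_zero_one, ← volume_restrict_Icc_add_Icc (b := 1 / 2) (by norm_num) (by norm_num),
    Measure.map_add _ _ measurable_rotateHalf, hleft, hright, add_comm]

lemma measurePreserving_doubleReflect :
    MeasurePreserving doubleReflect (unif 0 1) (unif 0 1) := by
  refine ⟨measurable_doubleReflect, ?_⟩
  have hleft : (volume.restrict (Icc 0 (1 / 2))).map doubleReflect
      = ENNReal.ofReal 2⁻¹ • volume.restrict (Icc 0 1) := by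
    rw [map_volume_restrict_Icc_of_eqOn_Ico (by norm_num) (α := -2) (β := 1) (by norm_num)
      (fun x hx => by rw [doubleReflect, if_pos hx.2]; ring)]
    norm_num [uIcc_of_ge]
  have hright : (volume.restrict (Icc (1 / 2) 1)).map doubleReflect
      = ENNReal.ofReal 2⁻¹ • volume.restrict (Icc 0 1) := by
    rw [map_volume_restrict_Icc_of_eqOn_Ico (by norm_num) (α := -2) (β := 2) (by norm_num)
      (fun x hx => by rw [doubleReflect, if_neg (not_lt.2 hx.1)]; ring)]
    norm_num [uIcc_of_ge]
  rw [unif_zero_one]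
  conv_lhs => rw [← volume_restrict_Icc_add_Icc (b := 1 / 2) (by norm_num) (by norm_num)]
  rw [Measure.map_add _ _ measurable_doubleReflect, hleft, hright, ← add_smul,
    ← ENNReal.ofReal_add (by norm_num) (by norm_num)]
  norm_num

theorem exists_measurePreserving_unif_sum_eq_half : ∀ n : ℕ, 2 ≤ n →
    ∃ φ : Fin n → ℝ → ℝ, (∀ i, MeasurePreserving (φ i) (unif 0 1) (unif 0 1)) ∧
      ∀ x, ∑ i, φ i x = n / 2
  | 2, _ => ⟨![id, fun x => 1 - x],
      Fin.forall_fin_two.2 ⟨MeasurePreserving.id _, measurePreserving_one_sub_unif⟩,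
      fun x => by simp⟩
  | 3, _ => ⟨![id, rotateHalf, doubleReflect],
      by simp [Fin.forall_fin_succ, MeasurePreserving.id, measurePreserving_rotateHalf,
        measurePreserving_doubleReflect],
      fun x => by simp [Fin.sum_univ_three, add_rotateHalf_add_doubleReflect]⟩
  | n + 4, _ => by
      obtain ⟨φ, hφ, hsum⟩ := exists_measurePreserving_unif_sum_eq_half (n + 2) (by omega)
      refine ⟨Fin.cons id (Fin.cons (fun x => 1 - x) φ), ?_, fun x => ?_⟩
      · rw [Fin.forall_fin_succ, Fin.forall_fin_succ]
        exact ⟨MeasurePreserving.id _, measurePreserving_one_sub_unif, hφ⟩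
      · simp only [Fin.sum_univ_succ (n := n + 3), Fin.sum_univ_succ (n := n + 2), Fin.cons_zero,
          Fin.cons_succ, id, hsum]
        push_cast
        ring

lemma volume_restrict_Icc_zero_eq_smul_map {p : ℝ} (hp : 0 < p) :
    volume.restrict (Icc 0 p) = ENNReal.ofReal p • (unif 0 1).map (p * ·) := by
  have h := map_affine_volume_restrict_uIcc hp.ne' 0 0 1
  simp only [mul_zero, mul_one, add_zero, uIcc_of_le zero_le_one, uIcc_of_le hp.le] at h
  rw [unif_zero_one, h, smul_smul, abs_of_pos (inv_pos.2 hp), ← ENNReal.ofReal_mul hp.le,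
    mul_inv_cancel₀ hp.ne', ENNReal.ofReal_one, one_smul]

noncomputable def squeeze (p : ℝ) (φ : ℝ → ℝ) (x : ℝ) : ℝ := if x < p then p * φ (x / p) else x

lemma measurePreserving_squeeze {φ : ℝ → ℝ} (hφ : MeasurePreserving φ (unif 0 1) (unif 0 1))
    {p : ℝ} (hp0 : 0 ≤ p) (hp1 : p ≤ 1) :
    MeasurePreserving (squeeze p φ) (unif 0 1) (unif 0 1) := by
  have hφm := hφ.measurable
  have hmeas : Measurable (squeeze p φ) :=
    Measurable.ite measurableSet_Iio (by fun_prop) measurable_id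
  have hleft : (volume.restrict (Icc 0 p)).map (squeeze p φ) = volume.restrict (Icc 0 p) := by
    rcases hp0.eq_or_lt with rfl | hp
    · simp
    rw [map_volume_restrict_Icc_congr (f := squeeze p φ) (g := fun x => p * φ (x / p))
      (fun x hx => if_pos hx.2)]
    conv_lhs => rw [volume_restrict_Icc_zero_eq_smul_map hp]
    rw [Measure.map_smul, Measure.map_map (by fun_prop) (by fun_prop),
      show (fun x => p * φ (x / p)) ∘ (p * ·) = (p * ·) ∘ φ by
        ext x; simp [mul_div_cancel_left₀ _ hp.ne'],
      ← Measure.map_map (by fun_prop) hφm, hφ.map_eq,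
      ← volume_restrict_Icc_zero_eq_smul_map hp]
  have hright : (volume.restrict (Icc p 1)).map (squeeze p φ) = volume.restrict (Icc p 1) := by
    rw [map_volume_restrict_Icc_of_eqOn_Ico hp1 one_ne_zero (β := 0)
      (fun x hx => by rw [squeeze, if_neg (not_lt.2 hx.1)]; ring)]
    simp [uIcc_of_le hp1]
  refine ⟨hmeas, ?_⟩
  rw [unif_zero_one]
  conv_lhs => rw [← volume_restrict_Icc_add_Icc hp0 hp1]
  rw [Measure.map_add _ _ hmeas, hleft, hright, volume_restrict_Icc_add_Icc hp0 hp1]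

lemma sum_squeeze {n : ℕ} {φ : Fin n → ℝ → ℝ} (hsum : ∀ x, ∑ i, φ i x = n / 2) (p x : ℝ) :
    ∑ i, squeeze p (φ i) x = if x < p then p * n / 2 else n * x := by
  split_ifs with hx
  · simp only [squeeze, if_pos hx, ← Finset.mul_sum, hsum]
    ring
  · simp [squeeze, hx]

def AttainableProb (n : ℕ) (s : Set ℝ) (r : ℝ) : Prop :=
  ∃ (Ω : Type) (_ : MeasureSpace Ω), IsProbabilityMeasure (ℙ : Measure Ω) ∧
    ∃ X : Fin n → Ω → ℝ, (∀ i, Measurable (X i)) ∧ (∀ i, Measure.map (X i) ℙ = unif 0 1) ∧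
      r = (ℙ {ω | ∑ i, X i ω ∈ s}).toReal

lemma attainableProb_Icc {n : ℕ} (hn : 2 ≤ n) {a c p : ℝ} (hp0 : 0 ≤ p) (hp1 : p ≤ 1)
    (ha : a ≤ p * n / 2) (hc : p * n / 2 ≤ c) (hcp : c ≤ n * p) :
    AttainableProb n (Icc a c) p := by
  obtain ⟨φ, hφ, hsum⟩ := exists_measurePreserving_unif_sum_eq_half n hn
  have hψ i := measurePreserving_squeeze (hφ i) hp0 hp1
  refine ⟨ℝ, ⟨unif 0 1⟩, isProbabilityMeasure_unif_zero_one,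
    fun i => squeeze p (φ i), fun i => (hψ i).measurable, fun i => (hψ i).map_eq, ?_⟩
  change p = (unif 0 1 {x | ∑ i, squeeze p (φ i) x ∈ Icc a c}).toReal
  have hn0 : (0 : ℝ) < n := by positivity
  have hlow : Ico 0 p ⊆ {x | ∑ i, squeeze p (φ i) x ∈ Icc a c} ∩ Icc 0 1 := fun x hx =>
    ⟨by simp [sum_squeeze hsum, hx.2, ha, hc], hx.1, hx.2.le.trans hp1⟩
  have hhigh : {x | ∑ i, squeeze p (φ i) x ∈ Icc a c} ∩ Icc 0 1 ⊆ Icc 0 p := by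
    rintro x ⟨hx, hx0, -⟩
    refine ⟨hx0, not_lt.1 fun hpx => ?_⟩
    simp only [mem_ofPred_eq, sum_squeeze hsum, if_neg (not_lt.2 hpx.le), mem_Icc] at hx
    nlinarith
  have hvol : unif 0 1 {x | ∑ i, squeeze p (φ i) x ∈ Icc a c} = ENNReal.ofReal p := by
    rw [unif_zero_one, Measure.restrict_apply' measurableSet_Icc]
    refine le_antisymm ((measure_mono hhigh).trans_eq ?_) (le_of_eq_of_le ?_ (measure_mono hlow))
      <;> simp
  rw [hvol, ENNReal.toReal_ofReal hp0]

lemma map_one_sub_eq_unif {Ω : Type*} [MeasurableSpace Ω] {μ : Measure Ω} {X : Ω → ℝ}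
    (hX : Measurable X) (hlaw : μ.map X = unif 0 1) : μ.map (fun ω => 1 - X ω) = unif 0 1 := by
  rw [← measurePreserving_one_sub_unif.map_eq, ← hlaw,
    Measure.map_map measurePreserving_one_sub_unif.measurable hX]
  rfl

lemma AttainableProb.preimage_const_sub {n : ℕ} {s : Set ℝ} {r : ℝ} (h : AttainableProb n s r) :
    AttainableProb n ((fun x => n - x) ⁻¹' s) r := by
  obtain ⟨Ω, _, hP, X, hX, hlaw, rfl⟩ := h
  refine ⟨Ω, _, hP, fun i ω => 1 - X i ω, fun i => measurable_const.sub (hX i),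
    fun i => map_one_sub_eq_unif (hX i) (hlaw i), ?_⟩
  simp [Finset.sum_sub_distrib]

lemma Iic_inter_Icc_zero_one {p : ℝ} (hp1 : p ≤ 1) : Iic p ∩ Icc 0 1 = Icc 0 p := by
  ext x
  simp only [mem_inter_iff, mem_Iic, mem_Icc]
  exact ⟨fun h => ⟨h.2.1, h.1⟩, fun h => ⟨h.2, h.1, h.2.trans hp1⟩⟩

section UpperBound

variable {Ω : Type*} [MeasurableSpace Ω] {μ : Measure Ω}

lemma setIntegral_le_of_le_const_real [IsFiniteMeasure μ] {f : Ω → ℝ} {s : Set Ω} {c : ℝ}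
    (hs : MeasurableSet s) (hf : ∀ x ∈ s, f x ≤ c) (hfi : IntegrableOn f s μ) :
    ∫ x in s, f x ∂μ ≤ c * μ.real s :=
  calc ∫ x in s, f x ∂μ ≤ ∫ _ in s, c ∂μ :=
        setIntegral_mono_on hfi (integrableOn_const (measure_ne_top _ _)) hs hf
    _ = c * μ.real s := by rw [setIntegral_const, smul_eq_mul, mul_comm]

theorem setIntegral_sublevel_le [IsFiniteMeasure μ] {U : Ω → ℝ} (hU : Measurable U)
    (hUi : Integrable U μ) {A : Set Ω} (hA : MeasurableSet A) {c : ℝ}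
    (hμ : μ {ω | U ω ≤ c} = μ A) :
    ∫ ω in {ω | U ω ≤ c}, U ω ∂μ ≤ ∫ ω in A, U ω ∂μ := by
  set B := {ω | U ω ≤ c}
  have hB : MeasurableSet B := hU measurableSet_Iic
  have hdiff : μ.real (A \ B) = μ.real (B \ A) := by
    have hreal : μ.real B = μ.real A := congrArg ENNReal.toReal hμ
    have hA' := measureReal_inter_add_sdiff (s := A) hB (μ := μ)
    have hB' := measureReal_inter_add_sdiff (s := B) hA (μ := μ)
    rw [inter_comm] at hB'
    linarith
  have hAB : c * μ.real (A \ B) ≤ ∫ ω in A \ B, U ω ∂μ :=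
    setIntegral_ge_of_const_le_real (hA.diff hB) (measure_ne_top _ _)
      (fun ω hω => (not_le.1 hω.2).le) hUi.integrableOn
  have hBA : ∫ ω in B \ A, U ω ∂μ ≤ c * μ.real (B \ A) :=
    setIntegral_le_of_le_const_real (hB.diff hA) (fun ω hω => hω.1) hUi.integrableOn
  have hsplitA := integral_inter_add_sdiff hB (hUi.integrableOn (s := A))
  have hsplitB := integral_inter_add_sdiff hA (hUi.integrableOn (s := B))
  rw [inter_comm] at hsplitB
  rw [hdiff] at hAB
  linarith

variable {U : Ω → ℝ}

lemma integrable_of_map_eq_unif (hU : Measurable U) (hlaw : μ.map U = unif 0 1) :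
    Integrable U μ := by
  have h : Integrable id (μ.map U) := by
    rw [hlaw, unif_zero_one]
    exact continuous_id.integrableOn_Icc
  exact (integrable_map_measure (by fun_prop) hU.aemeasurable).1 h

lemma measure_setOf_le_of_map_eq_unif (hU : Measurable U) (hlaw : μ.map U = unif 0 1) {p : ℝ}
    (hp1 : p ≤ 1) : μ {ω | U ω ≤ p} = ENNReal.ofReal p := by
  change μ (U ⁻¹' Iic p) = _
  rw [← Measure.map_apply hU measurableSet_Iic, hlaw, unif_zero_one,
    Measure.restrict_apply measurableSet_Iic, Iic_inter_Icc_zero_one hp1, Real.volume_Icc,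
    sub_zero]

lemma setIntegral_setOf_le_of_map_eq_unif (hU : Measurable U) (hlaw : μ.map U = unif 0 1) {p : ℝ}
    (hp0 : 0 ≤ p) (hp1 : p ≤ 1) : ∫ ω in {ω | U ω ≤ p}, U ω ∂μ = p ^ 2 / 2 := by
  change ∫ ω in U ⁻¹' Iic p, id (U ω) ∂μ = _
  rw [← setIntegral_map measurableSet_Iic (by fun_prop) hU.aemeasurable, hlaw, unif_zero_one,
    Measure.restrict_restrict measurableSet_Iic, Iic_inter_Icc_zero_one hp1,
    integral_Icc_eq_integral_Ioc, ← intervalIntegral.integral_of_le hp0]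
  simp [integral_id]

lemma sq_measureReal_div_two_le_setIntegral [IsProbabilityMeasure μ] (hU : Measurable U)
    (hlaw : μ.map U = unif 0 1) {A : Set Ω} (hA : MeasurableSet A) :
    μ.real A ^ 2 / 2 ≤ ∫ ω in A, U ω ∂μ := by
  have hp1 : μ.real A ≤ 1 := measureReal_le_one
  rw [← setIntegral_setOf_le_of_map_eq_unif hU hlaw measureReal_nonneg hp1]
  refine setIntegral_sublevel_le hU (integrable_of_map_eq_unif hU hlaw) hA ?_
  rw [measure_setOf_le_of_map_eq_unif hU hlaw hp1, ofReal_measureReal]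

lemma mul_measureReal_sum_le_le [IsProbabilityMeasure μ] {n : ℕ} {X : Fin n → Ω → ℝ}
    (hX : ∀ i, Measurable (X i)) (hlaw : ∀ i, μ.map (X i) = unif 0 1) {c : ℝ} (hc : 0 ≤ c) :
    n * μ.real {ω | ∑ i, X i ω ≤ c} ≤ 2 * c := by
  set A := {ω | ∑ i, X i ω ≤ c}
  have hA : MeasurableSet A := (Finset.measurable_sum _ fun i _ => hX i) measurableSet_Iic
  have hXi i := integrable_of_map_eq_unif (hX i) (hlaw i)
  have hlow : n * (μ.real A ^ 2 / 2) ≤ ∫ ω in A, ∑ i, X i ω ∂μ := by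
    rw [integral_finsetSum _ fun i _ => (hXi i).integrableOn]
    simpa using Finset.sum_le_sum (s := Finset.univ) fun i _ =>
      sq_measureReal_div_two_le_setIntegral (hX i) (hlaw i) hA
  have hup : ∫ ω in A, ∑ i, X i ω ∂μ ≤ c * μ.real A :=
    setIntegral_le_of_le_const_real hA (fun ω hω => hω)
      (integrable_finsetSum _ fun i _ => hXi i).integrableOn
  rcases measureReal_nonneg.eq_or_lt with h0 | hpos
  · rw [← h0]
    linarith
  · nlinarith

end UpperBound

namespace AttainableProb

variable {n : ℕ} {s : Set ℝ} {r : ℝ}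

lemma le_one (h : AttainableProb n s r) : r ≤ 1 := by
  obtain ⟨Ω, _, hP, X, -, -, rfl⟩ := h
  exact measureReal_le_one

lemma mul_le_of_subset_Iic (h : AttainableProb n s r) {c : ℝ} (hs : s ⊆ Iic c) (hc : 0 ≤ c) :
    n * r ≤ 2 * c := by
  obtain ⟨Ω, _, hP, X, hX, hlaw, rfl⟩ := h
  calc n * (ℙ : Measure Ω).real {ω | ∑ i, X i ω ∈ s}
      ≤ n * (ℙ : Measure Ω).real {ω | ∑ i, X i ω ≤ c} :=
        mul_le_mul_of_nonneg_left (measureReal_mono fun ω hω => hs hω) n.cast_nonneg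
    _ ≤ 2 * c := mul_measureReal_sum_le_le hX hlaw hc

end AttainableProb

lemma attainableProb_min {n : ℕ} (hn : 2 ≤ n) {a b : ℝ} (ha : 0 ≤ a) (hb : 0 ≤ b)
    (hab : a + b ≤ n) :
    AttainableProb n (Icc a (a + b)) (min (min (2 * (a + b) / n) (2 * (n - a) / n)) 1) := by
  have hn0 : (0 : ℝ) < n := by positivity
  rcases le_total (a + b) (n / 2) with hlow | hlow
  · rw [min_assoc, min_eq_left (le_min (by gcongr; linarith) ((div_le_one hn0).2 (by linarith)))]
    exact attainableProb_Icc hn (by positivity) ((div_le_one hn0).2 (by linarith))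
      (by field_simp; linarith) (by field_simp; rfl) (by field_simp; linarith)
  rcases le_total (n / 2 : ℝ) a with hhigh | hhigh
  · rw [min_comm (2 * (a + b) / n), min_assoc,
      min_eq_left (le_min (by gcongr; linarith) ((div_le_one hn0).2 (by linarith)))]
    have h := (attainableProb_Icc hn (a := n - (a + b)) (c := n - a) (p := 2 * (n - a) / n)
      (by apply div_nonneg <;> linarith)
      ((div_le_one hn0).2 (by linarith)) (by field_simp; linarith) (by field_simp; rfl)
      (by field_simp; linarith)).preimage_const_sub
    rwa [preimage_const_sub_Icc, sub_sub_cancel, sub_sub_cancel] at h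
  · rw [min_eq_right (le_min ((le_div_iff₀ hn0).2 (by linarith))
      ((le_div_iff₀ hn0).2 (by linarith)))]
    exact attainableProb_Icc hn zero_le_one le_rfl (by linarith) (by linarith) (by linarith)

theorem stmt19 (n : ℕ) (hn : 3 ≤ n) (a b : ℝ) (ha : 0 ≤ a) (hb : 0 ≤ b)
    (hab : a + b ≤ (n : ℝ)) :
    IsGreatest {r : ℝ | ∃ (Ω : Type) (_ : MeasureSpace Ω),
        IsProbabilityMeasure (ℙ : Measure Ω) ∧
        ∃ X : Fin n → Ω → ℝ, (∀ i, Measurable (X i)) ∧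
          (∀ i, Measure.map (X i) ℙ = unif 0 1) ∧
          r = (ℙ {ω | ∑ i, X i ω ∈ Set.Icc a (a + b)}).toReal}
      (min (min (2 * (a + b) / n) (2 * ((n : ℝ) - a) / n)) 1) := by
  have hn0 : (0 : ℝ) < n := by positivity
  refine ⟨attainableProb_min (by omega) ha hb hab,
    fun r (hr : AttainableProb n _ r) => le_min (le_min ?_ ?_) hr.le_one⟩
  · rw [le_div_iff₀ hn0, mul_comm]
    exact hr.mul_le_of_subset_Iic Icc_subset_Iic_self (by linarith)
  · have hrefl : AttainableProb n (Icc (n - (a + b)) (n - a)) r := by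
      simpa only [preimage_const_sub_Icc] using hr.preimage_const_sub
    rw [le_div_iff₀ hn0, mul_comm]
    exact hrefl.mul_le_of_subset_Iic Icc_subset_Iic_self (by linarith)
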